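/- arXiv:2510.06490 — 6 statements merged into one kernel-verified Lean document; each statement's English description precedes it below -/
import Mathlib

section
/- Let Θ̃ be the unique positive solution of ∑_{j=1}^m σ_j²/(Θ̃ + k σ_j²) = 1 where σ_1 ≥ ... ≥ σ_m > 0 and 0 < k < m. Then Θ̃ ≥ ∑_{j=k+1}^m σ_j². -/
/-!
Put `c = σ_{k+1}²` and `D = Θ̃ + k c`. Since `x ↦ x / (Θ̃ + k x)` is increasing, each of the
`k` head terms of the defining sum is at least `c / D`, and each tail term
`σ_j² / (Θ̃ + k σ_j²)` is at least `σ_j² / D`. Hence `1 ≥ (k c + ∑_{j>k} σ_j²) / D`,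
which is `Θ̃ ≥ ∑_{j>k} σ_j²`.
-/

open Finset

lemma div_add_mul_le_div_add_mul {Θ t x y : ℝ} (hΘ : 0 < Θ) (ht : 0 ≤ t) (hx : 0 ≤ x)
    (hxy : x ≤ y) : x / (Θ + t * x) ≤ y / (Θ + t * y) := by
  rw [div_le_div_iff₀ (by positivity) (by nlinarith)]
  nlinarith

theorem sum_filter_le_of_sum_div_le_one {ι : Type*} {s : Finset ι} {p : ι → Prop}
    [DecidablePred p] {a : ι → ℝ} {c Θ : ℝ} (hΘ : 0 < Θ) (hc : 0 ≤ c)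
    (ha : ∀ i ∈ s, 0 ≤ a i) (hhead : ∀ i ∈ s, ¬ p i → c ≤ a i)
    (htail : ∀ i ∈ s, p i → a i ≤ c)
    (hsum : ∑ i ∈ s, a i / (Θ + #{i ∈ s | ¬ p i} * a i) ≤ 1) :
    ∑ i ∈ s with p i, a i ≤ Θ := by
  set k : ℝ := (#{i ∈ s | ¬ p i} : ℝ)
  have hk : 0 ≤ k := Nat.cast_nonneg _
  have hD : 0 < Θ + k * c := by positivity
  have head_bound : k * (c / (Θ + k * c)) ≤ ∑ i ∈ s with ¬ p i, a i / (Θ + k * a i) := by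
    rw [← nsmul_eq_mul, ← sum_const]
    refine sum_le_sum fun i hi => ?_
    rw [mem_filter] at hi
    exact div_add_mul_le_div_add_mul hΘ hk hc (hhead i hi.1 hi.2)
  have tail_bound : (∑ i ∈ s with p i, a i) / (Θ + k * c) ≤
      ∑ i ∈ s with p i, a i / (Θ + k * a i) := by
    rw [sum_div]
    refine sum_le_sum fun i hi => ?_
    rw [mem_filter] at hi
    have hai := ha i hi.1
    exact div_le_div_of_nonneg_left hai (by positivity)
      (by nlinarith [htail i hi.1 hi.2])
  have hsplit := sum_filter_add_sum_filter_not s p fun i => a i / (Θ + k * a i)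
  have hratio : (k * c + ∑ i ∈ s with p i, a i) / (Θ + k * c) ≤ 1 := by
    rw [add_div, mul_div_assoc]
    linarith
  rw [div_le_one hD] at hratio
  linarith

theorem rsvd_error_lower_bound_general (m k : ℕ) (hkm : k < m)
    (σ : Fin m → ℝ) (hσ : ∀ j, 0 < σ j) (hmono : Antitone σ)
    (Θ : ℝ) (hΘ : 0 < Θ)
    (heq : ∑ j : Fin m, σ j ^ 2 / (Θ + (k : ℝ) * σ j ^ 2) = 1) :
    (∑ j ∈ Finset.univ.filter (fun j : Fin m => k ≤ (j : ℕ)), σ j ^ 2) ≤ Θ := by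
  set κ : Fin m := ⟨k, hkm⟩
  have hcard : #{j : Fin m | ¬ k ≤ (j : ℕ)} = k := by
    simp only [not_le, Fin.card_filter_val_lt, min_eq_right hkm.le]
  refine sum_filter_le_of_sum_div_le_one (c := σ κ ^ 2) hΘ (by positivity)
    (fun j _ => sq_nonneg _) (fun j _ hj => ?_) (fun j _ hj => ?_) (by rw [hcard, heq])
  · exact pow_le_pow_left₀ (hσ κ).le (hmono (Fin.le_def.mpr (not_le.mp hj).le)) 2
  · exact pow_le_pow_left₀ (hσ j).le (hmono (Fin.le_def.mpr hj)) 2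

/-- Lower bound: the unique positive solution Θ̃ of ∑ σ_j²/(Θ̃ + k σ_j²) = 1
satisfies Θ̃ ≥ ∑_{j>k} σ_j², where σ is nonincreasing. -/
theorem rsvd_error_lower_bound (m k : ℕ) (hk : 0 < k) (hkm : k < m)
    (σ : Fin m → ℝ) (hσ : ∀ j, 0 < σ j) (hmono : Antitone σ)
    (Θ : ℝ) (hΘ : 0 < Θ)
    (heq : ∑ j : Fin m, σ j ^ 2 / (Θ + (k : ℝ) * σ j ^ 2) = 1) :
    (∑ j ∈ Finset.univ.filter (fun j : Fin m => k ≤ (j : ℕ)), σ j ^ 2) ≤ Θ :=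
  rsvd_error_lower_bound_general m k hkm σ hσ hmono Θ hΘ heq
end

section
/- Let σ_1 ≥ ... ≥ σ_m > 0, integers 0 ≤ r < k < m, C := (m−k)k/((m−r)(k−r)), and let Θ̃ > 0 solve ∑_{j=1}^m σ_j²/(Θ̃ + k σ_j²) = 1. Then Θ̃ ≤ C · ∑_{j=r+1}^m σ_j². -/
/-!
The map `θ ↦ ∑ⱼ σⱼ² / (θ + k σⱼ²)` is strictly decreasing, so it suffices to show that it is at most
`1` at `A := C T`, where `T` is the tail sum `∑_{j ≥ r} σⱼ²`. Each of the `r` leading terms is below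
`1 / k`. The `m - r` tail terms are values of the concave map `t ↦ t / (A + k t)`, so by Jensen their
sum is at most `m - r` times its value at the mean `T / (m - r)`. The constant `C` is exactly the one
for which these two bounds add up to `1`.
-/

open Finset

lemma div_add_mul_le_tangent {A k x s : ℝ} (hA : 0 ≤ A) (hk : 0 ≤ k) (hx : 0 < A + k * x)
    (hs : 0 < A + k * s) :
    x / (A + k * x) ≤ s / (A + k * s) + A * (x - s) / (A + k * s) ^ 2 := by
  rw [div_add_div _ _ hs.ne' (by positivity), div_le_div_iff₀ hx (by positivity)]
  nlinarith [mul_nonneg (mul_nonneg hA hk) (sq_nonneg (s - x))]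

lemma div_add_mul_le_inv {A k x : ℝ} (hA : 0 ≤ A) (hk : 0 < k) (hx : 0 ≤ x) :
    x / (A + k * x) ≤ k⁻¹ := by
  rcases hx.eq_or_lt with rfl | hx
  · simp [hk.le]
  rw [div_le_iff₀ (by positivity), mul_add, inv_mul_cancel_left₀ hk.ne']
  linarith [mul_nonneg (inv_nonneg.2 hk.le) hA]

section

variable {ι : Type*} (s : Finset ι) {x : ι → ℝ} {k : ℝ}

lemma sum_div_add_mul_le_card_div {A : ℝ} (hA : 0 ≤ A) (hk : 0 < k) (hx : ∀ j ∈ s, 0 ≤ x j) :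
    ∑ j ∈ s, x j / (A + k * x j) ≤ #s / k := by
  calc ∑ j ∈ s, x j / (A + k * x j) ≤ ∑ _j ∈ s, k⁻¹ :=
        sum_le_sum fun j hj => div_add_mul_le_inv hA hk (hx j hj)
    _ = #s / k := by rw [sum_const, nsmul_eq_mul, div_eq_mul_inv]

-- Jensen's inequality for `t ↦ t / (A + k t)`, obtained by summing its tangent line at the mean.
lemma sum_div_add_mul_le_at_mean {A : ℝ} (hA : 0 < A) (hk : 0 ≤ k) (hx : ∀ j ∈ s, 0 ≤ x j) :
    ∑ j ∈ s, x j / (A + k * x j) ≤ #s * (∑ j ∈ s, x j) / (#s * A + k * ∑ j ∈ s, x j) := by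
  rcases s.eq_empty_or_nonempty with rfl | hne
  · simp
  set n : ℝ := (#s : ℝ)
  set T := ∑ j ∈ s, x j
  have hn : 0 < n := by simpa [n] using hne.card_pos
  have hT : 0 ≤ T := sum_nonneg hx
  have hmean : 0 < A + k * (T / n) := by positivity
  calc ∑ j ∈ s, x j / (A + k * x j)
      ≤ ∑ j ∈ s, (T / n / (A + k * (T / n)) + A * (x j - T / n) / (A + k * (T / n)) ^ 2) :=
        sum_le_sum fun j hj =>
          div_add_mul_le_tangent hA.le hk (by nlinarith [hx j hj]) hmean
    _ = n * (T / n / (A + k * (T / n))) + A * (T - n * (T / n)) / (A + k * (T / n)) ^ 2 := by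
        rw [sum_add_distrib, sum_const, nsmul_eq_mul, ← sum_div, ← mul_sum, sum_sub_distrib,
          sum_const, nsmul_eq_mul]
    _ = n * T / (n * A + k * T) := by
        rw [mul_div_cancel₀ T hn.ne', sub_self, mul_zero, zero_div, add_zero]
        field_simp

lemma strictAntiOn_sum_div_add_mul (hne : s.Nonempty) (hk : 0 ≤ k) (hx : ∀ j ∈ s, 0 < x j) :
    StrictAntiOn (fun θ => ∑ j ∈ s, x j / (θ + k * x j)) (Set.Ioi 0) := by
  intro a ha b _ hab
  have hxk : ∀ j ∈ s, 0 ≤ k * x j := fun j hj => mul_nonneg hk (hx j hj).le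
  refine sum_lt_sum_of_nonempty hne fun j hj => ?_
  exact div_lt_div_of_pos_left (hx j hj) (by linarith [hxk j hj, Set.mem_Ioi.1 ha])
    (by linarith [hxk j hj])

end

lemma card_filter_not_le_val {m r : ℕ} (h : r ≤ m) : #{j : Fin m | ¬r ≤ (j : ℕ)} = r := by
  simpa [not_le, h] using Fin.card_filter_val_lt (n := m) (m := r)

lemma card_filter_le_val (m r : ℕ) : #{j : Fin m | r ≤ (j : ℕ)} = m - r := by
  have := card_filter_add_card_filter_not (s := (univ : Finset (Fin m))) (fun j => (j : ℕ) < r)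
  simp only [Fin.card_filter_val_lt, not_lt, card_univ, Fintype.card_fin] at this
  omega

lemma div_add_div_eq_one_of_rsvd_constant {m r k T : ℝ} (hr : 0 ≤ r) (hrk : r < k) (hkm : k < m)
    (hT : T ≠ 0) :
    r / k + (m - r) * T / ((m - r) * ((m - k) * k / ((m - r) * (k - r)) * T) + k * T) = 1 := by
  have hk : k ≠ 0 := by linarith
  have hkr : k - r ≠ 0 := by linarith
  have hmr : m - r ≠ 0 := by linarith
  have hden : (m - r) * ((m - k) * k / ((m - r) * (k - r)) * T) + k * T
      = k * (m - r) * T / (k - r) := by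
    field_simp
    ring
  rw [hden]
  field_simp
  ring

theorem rsvd_error_upper_bound_general (m r k : ℕ) (hrk : r < k) (hkm : k < m)
    (σ : Fin m → ℝ) (hσ : ∀ j, 0 < σ j)
    (Θ : ℝ) (hΘ : 0 < Θ)
    (heq : ∑ j : Fin m, σ j ^ 2 / (Θ + (k : ℝ) * σ j ^ 2) = 1) :
    Θ ≤ (((m : ℝ) - k) * k / (((m : ℝ) - r) * ((k : ℝ) - r))) *
      ∑ j ∈ Finset.univ.filter (fun j : Fin m => r ≤ (j : ℕ)), σ j ^ 2 := by
  set tail := univ.filter fun j : Fin m => r ≤ (j : ℕ)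
  set head := univ.filter fun j : Fin m => ¬r ≤ (j : ℕ)
  set T := ∑ j ∈ tail, σ j ^ 2
  set A := ((m : ℝ) - k) * k / ((m - r) * (k - r)) * T
  have hrm : r < m := hrk.trans hkm
  have hrk' : (r : ℝ) < k := by exact_mod_cast hrk
  have hkm' : (k : ℝ) < m := by exact_mod_cast hkm
  have hk : (0 : ℝ) < k := r.cast_nonneg.trans_lt hrk'
  have hx : ∀ j, 0 < σ j ^ 2 := fun j => pow_pos (hσ j) 2
  have hT : 0 < T := sum_pos (fun j _ => hx j) ⟨⟨r, hrm⟩, by simp [tail]⟩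
  have hA : 0 < A := by
    have := sub_pos.2 hrk'; have := sub_pos.2 hkm'; have := sub_pos.2 (hrk'.trans hkm')
    positivity
  have htail : (#tail : ℝ) = m - r := by rw [card_filter_le_val, Nat.cast_sub hrm.le]
  have hbound : ∑ j : Fin m, σ j ^ 2 / (A + k * σ j ^ 2) ≤ 1 := calc
    _ = ∑ j ∈ tail, σ j ^ 2 / (A + k * σ j ^ 2) + ∑ j ∈ head, σ j ^ 2 / (A + k * σ j ^ 2) :=
        (sum_filter_add_sum_filter_not _ _ _).symm
    _ ≤ (m - r) * T / ((m - r) * A + k * T) + r / k := add_le_add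
        (by simpa only [htail] using sum_div_add_mul_le_at_mean tail hA hk.le fun j _ => (hx j).le)
        (by simpa only [head, card_filter_not_le_val hrm.le] using
          sum_div_add_mul_le_card_div head hA.le hk fun j _ => (hx j).le)
    _ = 1 := by
        rw [add_comm]
        exact div_add_div_eq_one_of_rsvd_constant r.cast_nonneg hrk' hkm' hT.ne'
  have hanti := strictAntiOn_sum_div_add_mul univ ⟨⟨r, hrm⟩, mem_univ _⟩ hk.le fun j _ => hx j
  exact (hanti.le_iff_ge hA hΘ).1 (heq ▸ hbound)

/-- Upper bound: Θ̃ ≤ C ∑_{j>r} σ_j² with C = (m−k)k/((m−r)(k−r)). -/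
theorem rsvd_error_upper_bound (m r k : ℕ) (hrk : r < k) (hkm : k < m)
    (σ : Fin m → ℝ) (hσ : ∀ j, 0 < σ j) (hmono : Antitone σ)
    (Θ : ℝ) (hΘ : 0 < Θ)
    (heq : ∑ j : Fin m, σ j ^ 2 / (Θ + (k : ℝ) * σ j ^ 2) = 1) :
    Θ ≤ (((m : ℝ) - k) * k / (((m : ℝ) - r) * ((k : ℝ) - r))) *
      ∑ j ∈ Finset.univ.filter (fun j : Fin m => r ≤ (j : ℕ)), σ j ^ 2 :=
  rsvd_error_upper_bound_general m r k hrk hkm σ hσ Θ hΘ heq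
end

section
/- For any S > 0, integers 0 ≤ r < k < d, and nonnegative reals σ_{r+1},...,σ_d with ∑_{i=r+1}^d σ_i² = S, letting C = (d−k)k/((d−r)(k−r)) and θ* = k/(C·S), one has ∑_{i=r+1}^d 1/(1 + θ* σ_i²) ≥ d − k. -/
/-!
Writing `n = d - r` for the number of summands and `θ` for the coefficient of `σ i ^ 2`,
the harmonic–arithmetic mean inequality (Sedrakyan's form of Cauchy–Schwarz) bounds the sum
from below by `n ^ 2 / (n + θ S)`, which is the Jensen bound for the convex function
`x ↦ 1 / (1 + θ x)`. With `θ S = (d - r) (k - r) / (d - k)` this is exactly `d - k`.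
-/

open Finset

theorem Finset.card_sq_div_sum_le_sum_one_div {ι : Type*} (s : Finset ι) {y : ι → ℝ}
    (hy : ∀ i ∈ s, 0 < y i) : (#s : ℝ) ^ 2 / ∑ i ∈ s, y i ≤ ∑ i ∈ s, 1 / y i := by
  simpa using sq_sum_div_le_sum_sq_div s (fun _ ↦ (1 : ℝ)) hy

theorem Finset.card_sq_div_le_sum_one_div_one_add_mul {ι : Type*} (s : Finset ι) (x : ι → ℝ)
    {θ : ℝ} (hθ : 0 ≤ θ) :
    (#s : ℝ) ^ 2 / (#s + θ * ∑ i ∈ s, x i ^ 2) ≤ ∑ i ∈ s, 1 / (1 + θ * x i ^ 2) := by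
  have hpos : ∀ i ∈ s, 0 < 1 + θ * x i ^ 2 := fun i _ ↦ by positivity
  simpa [sum_add_distrib, ← mul_sum] using s.card_sq_div_sum_le_sum_one_div hpos

theorem Fin.card_filter_le_val {d r : ℕ} (hrd : r < d) :
    #(univ.filter fun i : Fin d ↦ r ≤ (i : ℕ)) = d - r := by
  have : univ.filter (fun i : Fin d ↦ r ≤ (i : ℕ)) = Ici ⟨r, hrd⟩ := by
    ext i; simp [Fin.le_def]
  rw [this, Fin.card_Ici]

theorem jensen_bound_eq {d r k S : ℝ} (hr : 0 ≤ r) (hrk : r < k) (hkd : k < d) (hS : S ≠ 0) :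
    (d - r) ^ 2 / ((d - r) + k / ((d - k) * k / ((d - r) * (k - r)) * S) * S) = d - k := by
  have hdk : d - k ≠ 0 := by linarith
  have hdr : d - r ≠ 0 := by linarith
  have hk : k ≠ 0 := by linarith
  have hθS : k / ((d - k) * k / ((d - r) * (k - r)) * S) * S = (d - r) * (k - r) / (d - k) := by
    field_simp
  have hden : d - r + (d - r) * (k - r) / (d - k) = (d - r) ^ 2 / (d - k) := by
    field_simp
    ring
  rw [hθS, hden, div_div_cancel₀ (pow_ne_zero 2 hdr)]

theorem jensen_coeff_nonneg {d r k S : ℝ} (hr : 0 ≤ r) (hrk : r < k) (hkd : k < d) (hS : 0 ≤ S) :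
    0 ≤ k / ((d - k) * k / ((d - r) * (k - r)) * S) := by
  have hk : 0 ≤ k := by linarith
  have hdk : 0 ≤ d - k := by linarith
  exact div_nonneg hk <| mul_nonneg (div_nonneg (mul_nonneg hdk hk)
    (mul_nonneg (by linarith) (by linarith))) hS

theorem jensen_step_general (d r k : ℕ) (hrk : r < k) (hkd : k < d)
    (S : ℝ) (hS : 0 < S) (σ : Fin d → ℝ)
    (hsum : ∑ i ∈ Finset.univ.filter (fun i : Fin d => r ≤ (i : ℕ)), σ i ^ 2 = S) :
    ((d : ℝ) - k) ≤
      ∑ i ∈ Finset.univ.filter (fun i : Fin d => r ≤ (i : ℕ)),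
        1 / (1 + ((k : ℝ) / ((((d : ℝ) - k) * k / (((d : ℝ) - r) * ((k : ℝ) - r))) * S))
          * σ i ^ 2) := by
  have hrk' : (r : ℝ) < k := by exact_mod_cast hrk
  have hkd' : (k : ℝ) < d := by exact_mod_cast hkd
  have hθ := jensen_coeff_nonneg r.cast_nonneg hrk' hkd' hS.le
  have hcard : (#(univ.filter fun i : Fin d ↦ r ≤ (i : ℕ)) : ℝ) = d - r := by
    rw [Fin.card_filter_le_val (hrk.trans hkd), Nat.cast_sub (hrk.trans hkd).le]
  calc ((d : ℝ) - k)
      = ((d : ℝ) - r) ^ 2 / ((d - r) + (k : ℝ) / ((((d : ℝ) - k) * k /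
          (((d : ℝ) - r) * ((k : ℝ) - r))) * S) * S) :=
        (jensen_bound_eq r.cast_nonneg hrk' hkd' hS.ne').symm
    _ ≤ _ := by
        have :=
          (univ.filter fun i : Fin d ↦ r ≤ (i : ℕ)).card_sq_div_le_sum_one_div_one_add_mul σ hθ
        rwa [hcard, hsum] at this

/-- Jensen step: for θ* = k/(C·S) with C = (d−k)k/((d−r)(k−r)) and
∑_{i>r} σ_i² = S, one has ∑_{i>r} 1/(1 + θ* σ_i²) ≥ d − k. -/
theorem jensen_step (d r k : ℕ) (hrk : r < k) (hkd : k < d)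
    (S : ℝ) (hS : 0 < S) (σ : Fin d → ℝ) (hσ : ∀ i, 0 ≤ σ i)
    (hsum : ∑ i ∈ Finset.univ.filter (fun i : Fin d => r ≤ (i : ℕ)), σ i ^ 2 = S) :
    ((d : ℝ) - k) ≤
      ∑ i ∈ Finset.univ.filter (fun i : Fin d => r ≤ (i : ℕ)),
        1 / (1 + ((k : ℝ) / ((((d : ℝ) - k) * k / (((d : ℝ) - r) * ((k : ℝ) - r))) * S))
          * σ i ^ 2) :=
  jensen_step_general d r k hrk hkd S hS σ hsum
end

section
/- In the bilevel ensemble with a > b > 0, r < k < m, k = o(m), and a/b bounded, the closed-form error Θ̃ = ½[(r−k)a² + (m−r−k)b² + √(((r−k)a² + (m−r−k)b²)² + 4a²b²(m−k))] satisfies Θ̃ ≤ (m−k)b² + (k−r)a² · (m−k)b²/((m−r−k)b²+(k−r)a²) ≤ (m−k)b² + k a²; in particular Θ̃ / ((m−k)b²) → 1 as m → ∞ with k = o(m) and a/b = Θ(1). -/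
open Filter Topology

/-! Write `M = (m-k)b²`, `p = (k-r)a²`, `q = (m-r-k)b²` and `S = q - p`. Then `Θ̃` is the positive root
of `x (x - S) = a² M`, so it lies below any `U ≥ S/2` with `U (U - S) ≥ a² M` and above `S`. The
candidate `U = M + p M / (q + p)` qualifies because `U ≥ M` and `U - S ≥ p ≥ a²`. Since `b ≤ a`,
both `U` and `S` are within `k a²` of `M`, and `k a² / M = (a/b)² · k/(m-k) → 0`. -/

lemma half_mul_add_sqrt_le {S D U : ℝ} (hD : D ≤ U * (U - S)) (hSU : S ≤ 2 * U) :
    1 / 2 * (S + √(S ^ 2 + 4 * D)) ≤ U := by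
  have : √(S ^ 2 + 4 * D) ≤ 2 * U - S :=
    Real.sqrt_le_iff.mpr ⟨by linarith, by nlinarith⟩
  linarith

lemma le_half_mul_add_sqrt (S : ℝ) {D : ℝ} (hD : 0 ≤ D) :
    S ≤ 1 / 2 * (S + √(S ^ 2 + 4 * D)) := by
  have := (le_abs_self S).trans (Real.abs_le_sqrt (x := S) (y := S ^ 2 + 4 * D) (by linarith))
  linarith

noncomputable def bilevelTheta (a b : ℝ) (r k m : ℕ) : ℝ :=
  (1 / 2) * ((((r : ℝ) - k) * a ^ 2 + ((m : ℝ) - r - k) * b ^ 2) +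
    Real.sqrt ((((r : ℝ) - k) * a ^ 2 + ((m : ℝ) - r - k) * b ^ 2) ^ 2
      + 4 * a ^ 2 * b ^ 2 * ((m : ℝ) - k)))

noncomputable def bilevelBound (a b : ℝ) (r k m : ℕ) : ℝ :=
  ((m : ℝ) - k) * b ^ 2 + ((k : ℝ) - r) * a ^ 2 * (((m : ℝ) - k) * b ^ 2)
    / (((m : ℝ) - r - k) * b ^ 2 + ((k : ℝ) - r) * a ^ 2)

lemma bilevelTheta_eq (a b : ℝ) (r k m : ℕ) :
    bilevelTheta a b r k m = 1 / 2 * ((((m : ℝ) - r - k) * b ^ 2 - ((k : ℝ) - r) * a ^ 2) +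
      √((((m : ℝ) - r - k) * b ^ 2 - ((k : ℝ) - r) * a ^ 2) ^ 2
        + 4 * (a ^ 2 * (((m : ℝ) - k) * b ^ 2)))) := by
  unfold bilevelTheta
  ring_nf

section Bilevel

variable {a b : ℝ} {r k m : ℕ}

lemma bilevelTheta_le_bilevelBound (hrk : r < k) (hm : r + k ≤ m) :
    bilevelTheta a b r k m ≤ bilevelBound a b r k m := by
  have hrk' : (r : ℝ) + 1 ≤ k := by exact_mod_cast hrk
  have hm' : (r : ℝ) + k ≤ m := by exact_mod_cast hm
  rw [bilevelTheta_eq, bilevelBound]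
  set M := ((m : ℝ) - k) * b ^ 2
  set p := ((k : ℝ) - r) * a ^ 2
  set q := ((m : ℝ) - r - k) * b ^ 2
  have hp : a ^ 2 ≤ p := by nlinarith [sq_nonneg a]
  have hq : 0 ≤ q := mul_nonneg (by linarith) (sq_nonneg b)
  have hqM : q + r * b ^ 2 = M := by ring
  have hrb : 0 ≤ (r : ℝ) * b ^ 2 := by positivity
  have hp0 : 0 ≤ p := (sq_nonneg a).trans hp
  have hM0 : 0 ≤ M := by linarith
  have hfrac : 0 ≤ p * M / (q + p) := by positivity
  apply half_mul_add_sqrt_le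
  · have hUS : a ^ 2 ≤ M + p * M / (q + p) - (q - p) := by linarith
    nlinarith [mul_le_mul_of_nonneg_left hUS hM0, sq_nonneg a]
  · linarith

lemma bilevelBound_le (hb : 0 ≤ b) (hab : b ≤ a) (hrk : r ≤ k) (hm : r + k ≤ m) :
    bilevelBound a b r k m ≤ ((m : ℝ) - k) * b ^ 2 + k * a ^ 2 := by
  have hrk' : (r : ℝ) ≤ k := by exact_mod_cast hrk
  have hm' : (r : ℝ) + k ≤ m := by exact_mod_cast hm
  have hba : b ^ 2 ≤ a ^ 2 := pow_le_pow_left₀ hb hab 2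
  unfold bilevelBound
  gcongr
  apply div_le_of_le_mul₀
  · nlinarith [sq_nonneg a, sq_nonneg b]
  · positivity
  -- `k a² (q + p) - p M = a² (r (m-k) b² - k r b² + k (k-r) a²) ≥ a² b² (k-r)² ≥ 0`
  nlinarith [mul_le_mul_of_nonneg_left hba (by positivity : (0 : ℝ) ≤ a ^ 2 * (k * (k - r))),
    mul_nonneg (mul_nonneg (sq_nonneg a) (sq_nonneg b)) (sq_nonneg ((k : ℝ) - r)),
    mul_nonneg (mul_nonneg (sq_nonneg a) (sq_nonneg b)) (mul_nonneg r.cast_nonneg (sub_nonneg.2 hm'))]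

lemma sub_le_bilevelTheta (hb : 0 ≤ b) (hab : b ≤ a) (hkm : k ≤ m) :
    ((m : ℝ) - k) * b ^ 2 - k * a ^ 2 ≤ bilevelTheta a b r k m := by
  have hkm' : (k : ℝ) ≤ m := by exact_mod_cast hkm
  have hba : b ^ 2 ≤ a ^ 2 := pow_le_pow_left₀ hb hab 2
  rw [bilevelTheta_eq]
  refine le_trans ?_ (le_half_mul_add_sqrt _ (by positivity))
  nlinarith [mul_le_mul_of_nonneg_left hba (r.cast_nonneg : (0 : ℝ) ≤ r)]

lemma abs_bilevelTheta_div_sub_one_le (hb : 0 < b) (hab : b ≤ a) (hrk : r < k) (hm : r + k < m) :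
    |bilevelTheta a b r k m / (((m : ℝ) - k) * b ^ 2) - 1| ≤ (a / b) ^ 2 * (k / ((m : ℝ) - k)) := by
  have hkm : k < m := (Nat.le_add_left k r).trans_lt hm
  have hM : 0 < ((m : ℝ) - k) * b ^ 2 := by
    have := sub_pos.2 (Nat.cast_lt (α := ℝ).2 hkm); positivity
  have hupper := (bilevelTheta_le_bilevelBound (a := a) (b := b) hrk hm.le).trans
    (bilevelBound_le hb.le hab hrk.le hm.le)
  have hlower := sub_le_bilevelTheta (r := r) hb.le hab hkm.le
  rw [show (a / b) ^ 2 * (k / ((m : ℝ) - k)) = k * a ^ 2 / (((m : ℝ) - k) * b ^ 2) by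
    field_simp, div_sub_one hM.ne', abs_div, abs_of_pos hM, div_le_div_iff_of_pos_right hM,
    abs_le]
  constructor <;> linarith

end Bilevel

lemma eventually_two_mul_lt_of_tendsto_div {ι : Type*} {l : Filter ι} {k m : ι → ℕ}
    (hm : ∀ i, 0 < m i) (hko : Tendsto (fun i => (k i : ℝ) / m i) l (𝓝 0)) :
    ∀ᶠ i in l, 2 * k i < m i := by
  filter_upwards [hko.eventually (gt_mem_nhds one_half_pos)] with i hi
  rw [div_lt_iff₀ (by exact_mod_cast hm i)] at hi
  exact_mod_cast (by linarith : 2 * (k i : ℝ) < m i)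

lemma tendsto_div_sub_of_tendsto_div {ι : Type*} {l : Filter ι} {x y : ι → ℝ}
    (hy : ∀ i, y i ≠ 0) (h : Tendsto (fun i => x i / y i) l (𝓝 0)) :
    Tendsto (fun i => x i / (y i - x i)) l (𝓝 0) := by
  have := h.div (tendsto_const_nhds.sub h) (by norm_num : (1 : ℝ) - 0 ≠ 0)
  rw [zero_div] at this
  refine this.congr fun i => ?_
  rw [Pi.div_apply, one_sub_div (hy i), div_div_div_cancel_right₀ (hy i)]

theorem bilevel_asymptotics_general (m k r : ℕ → ℕ) (a b : ℕ → ℝ)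
    (hb : ∀ i, 0 < b i) (hab : ∀ i, b i < a i)
    (hrk : ∀ i, r i < k i) (hkm : ∀ i, k i < m i)
    (hko : Tendsto (fun i => (k i : ℝ) / (m i : ℝ)) atTop (nhds 0))
    (hratio : ∃ c C : ℝ, 0 < c ∧ ∀ i, c ≤ a i / b i ∧ a i / b i ≤ C)
    (Θ : ℕ → ℝ)
    (hΘ : ∀ i, Θ i = (1 / 2) * ((((r i : ℝ) - k i) * (a i) ^ 2
        + ((m i : ℝ) - r i - k i) * (b i) ^ 2) +
      Real.sqrt ((((r i : ℝ) - k i) * (a i) ^ 2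
          + ((m i : ℝ) - r i - k i) * (b i) ^ 2) ^ 2
        + 4 * (a i) ^ 2 * (b i) ^ 2 * ((m i : ℝ) - k i)))) :
    (∀ᶠ i in atTop,
      Θ i ≤ ((m i : ℝ) - k i) * (b i) ^ 2
          + ((k i : ℝ) - r i) * (a i) ^ 2 * (((m i : ℝ) - k i) * (b i) ^ 2)
            / (((m i : ℝ) - r i - k i) * (b i) ^ 2 + ((k i : ℝ) - r i) * (a i) ^ 2) ∧
      ((m i : ℝ) - k i) * (b i) ^ 2
          + ((k i : ℝ) - r i) * (a i) ^ 2 * (((m i : ℝ) - k i) * (b i) ^ 2)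
            / (((m i : ℝ) - r i - k i) * (b i) ^ 2 + ((k i : ℝ) - r i) * (a i) ^ 2)
        ≤ ((m i : ℝ) - k i) * (b i) ^ 2 + (k i : ℝ) * (a i) ^ 2) ∧
    Tendsto (fun i => Θ i / (((m i : ℝ) - k i) * (b i) ^ 2)) atTop (nhds 1) := by
  obtain ⟨_, C, -, hC⟩ := hratio
  obtain rfl : Θ = fun i => bilevelTheta (a i) (b i) (r i) (k i) (m i) := funext hΘ
  have hlarge : ∀ᶠ i in atTop, r i + k i < m i :=
    (eventually_two_mul_lt_of_tendsto_div (fun i => (hkm i).pos) hko).mono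
      fun i hi => by linarith [hrk i]
  refine ⟨hlarge.mono fun i hi => ⟨bilevelTheta_le_bilevelBound (hrk i) hi.le,
    bilevelBound_le (hb i).le (hab i).le (hrk i).le hi.le⟩, ?_⟩
  have hgap : Tendsto (fun i => C ^ 2 * ((k i : ℝ) / (m i - k i))) atTop (𝓝 0) := by
    simpa using (tendsto_div_sub_of_tendsto_div
      (fun i => Nat.cast_ne_zero.2 (hkm i).pos.ne') hko).const_mul (C ^ 2)
  refine tendsto_iff_norm_sub_tendsto_zero.2 (squeeze_zero' (.of_forall fun _ => norm_nonneg _)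
    (hlarge.mono fun i hi => ?_) hgap)
  refine (abs_bilevelTheta_div_sub_one_le (hb i) (hab i).le (hrk i) hi).trans ?_
  have : 0 ≤ a i / b i := div_nonneg ((hb i).trans (hab i)).le (hb i).le
  have : (0 : ℝ) ≤ k i / (m i - k i) :=
    div_nonneg (Nat.cast_nonneg _) (sub_nonneg.2 (Nat.cast_le.2 (hkm i).le))
  gcongr
  exact (hC i).2

/-- Bilevel ensemble asymptotics: with r < k < m, k = o(m), a/b bounded above and below,
the closed-form error Θ̃ eventually satisfies the stated upper bounds, and
Θ̃/((m−k)b²) → 1. -/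
theorem bilevel_asymptotics (m k r : ℕ → ℕ) (a b : ℕ → ℝ)
    (hb : ∀ i, 0 < b i) (hab : ∀ i, b i < a i)
    (hrk : ∀ i, r i < k i) (hkm : ∀ i, k i < m i)
    (hm : Tendsto m atTop atTop)
    (hko : Tendsto (fun i => (k i : ℝ) / (m i : ℝ)) atTop (nhds 0))
    (hratio : ∃ c C : ℝ, 0 < c ∧ ∀ i, c ≤ a i / b i ∧ a i / b i ≤ C)
    (Θ : ℕ → ℝ)
    (hΘ : ∀ i, Θ i = (1 / 2) * ((((r i : ℝ) - k i) * (a i) ^ 2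
        + ((m i : ℝ) - r i - k i) * (b i) ^ 2) +
      Real.sqrt ((((r i : ℝ) - k i) * (a i) ^ 2
          + ((m i : ℝ) - r i - k i) * (b i) ^ 2) ^ 2
        + 4 * (a i) ^ 2 * (b i) ^ 2 * ((m i : ℝ) - k i)))) :
    (∀ᶠ i in atTop,
      Θ i ≤ ((m i : ℝ) - k i) * (b i) ^ 2
          + ((k i : ℝ) - r i) * (a i) ^ 2 * (((m i : ℝ) - k i) * (b i) ^ 2)
            / (((m i : ℝ) - r i - k i) * (b i) ^ 2 + ((k i : ℝ) - r i) * (a i) ^ 2) ∧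
      ((m i : ℝ) - k i) * (b i) ^ 2
          + ((k i : ℝ) - r i) * (a i) ^ 2 * (((m i : ℝ) - k i) * (b i) ^ 2)
            / (((m i : ℝ) - r i - k i) * (b i) ^ 2 + ((k i : ℝ) - r i) * (a i) ^ 2)
        ≤ ((m i : ℝ) - k i) * (b i) ^ 2 + (k i : ℝ) * (a i) ^ 2) ∧
    Tendsto (fun i => Θ i / (((m i : ℝ) - k i) * (b i) ^ 2)) atTop (nhds 1) :=
  bilevel_asymptotics_general m k r a b hb hab hrk hkm hko hratio Θ hΘ
end

section
/- For B* = R⁻¹QᵀA where AΩ = QR as in RSVD, ‖B*‖₂ ≤ ‖A‖₂ / (σ_min(A) σ_min(Ω)), where σ_min denotes the smallest singular value (assuming A has full rank m = min(n,d) restriction making σ_min(A) > 0 and Ω has full column rank). -/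
/-!
For a unit vector `x` put `y = R⁻¹QᵀAx`. Then `Ry = QᵀAx`, and since `Q` has orthonormal columns,
`‖Ry‖ = ‖QRy‖ = ‖AΩy‖ ≥ σ_min(A) σ_min(Ω) ‖y‖`, while `‖QᵀAx‖ ≤ ‖Ax‖ ≤ ‖A‖₂`.
-/

open Matrix

/-- Euclidean norm of a finite-dimensional real vector. -/
noncomputable def enorm' {α : Type*} [Fintype α] (v : α → ℝ) : ℝ :=
  Real.sqrt (∑ i, v i ^ 2)

/-- Spectral (ℓ₂ → ℓ₂ operator) norm of a matrix. -/
noncomputable def opNorm' {α β : Type*} [Fintype α] [Fintype β]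
    (M : Matrix α β ℝ) : ℝ :=
  ⨆ x : {x : β → ℝ // enorm' x = 1}, enorm' (M.mulVec x)

/-- Smallest singular value of a matrix (as an infimum over the unit sphere). -/
noncomputable def sMin' {α β : Type*} [Fintype α] [Fintype β]
    (M : Matrix α β ℝ) : ℝ :=
  ⨅ x : {x : β → ℝ // enorm' x = 1}, enorm' (M.mulVec x)

section EuclideanNorm

variable {α β : Type*} [Fintype α] [Fintype β]

theorem enorm'_eq_norm (v : α → ℝ) : enorm' v = ‖(WithLp.toLp 2 v : EuclideanSpace ℝ α)‖ := by
  simp [enorm', EuclideanSpace.norm_eq]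

theorem enorm'_nonneg (v : α → ℝ) : 0 ≤ enorm' v :=
  Real.sqrt_nonneg _

theorem enorm'_smul (c : ℝ) (v : α → ℝ) : enorm' (c • v) = |c| * enorm' v := by
  simp only [enorm'_eq_norm, WithLp.toLp_smul, norm_smul, Real.norm_eq_abs]

theorem enorm'_sq (v : α → ℝ) : enorm' v ^ 2 = v ⬝ᵥ v := by
  rw [enorm'_eq_norm, ← real_inner_self_eq_norm_sq, EuclideanSpace.inner_toLp_toLp, star_trivial]

theorem dotProduct_le_enorm'_mul (v w : α → ℝ) : v ⬝ᵥ w ≤ enorm' v * enorm' w := by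
  simpa only [enorm'_eq_norm, EuclideanSpace.inner_toLp_toLp, star_trivial, dotProduct_comm]
    using real_inner_le_norm (WithLp.toLp 2 v) (WithLp.toLp 2 w)

theorem exists_enorm'_mulVec_le (M : Matrix α β ℝ) :
    ∃ C, ∀ v, enorm' (M *ᵥ v) ≤ C * enorm' v := by
  classical
  let T := LinearMap.toContinuousLinearMap (toEuclideanLin M)
  exact ⟨‖T‖, fun v => by simpa [enorm'_eq_norm, T] using T.le_opNorm (WithLp.toLp 2 v)⟩

end EuclideanNorm

section OrthonormalColumns

variable {α β : Type*} [Fintype α] [Fintype β] [DecidableEq β] {Q : Matrix α β ℝ}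

theorem enorm'_mulVec_of_transpose_mul_self_eq_one (hQ : Qᵀ * Q = 1) (w : β → ℝ) :
    enorm' (Q *ᵥ w) = enorm' w := by
  have hsq : enorm' (Q *ᵥ w) ^ 2 = enorm' w ^ 2 := by
    rw [enorm'_sq, enorm'_sq, dotProduct_mulVec, ← mulVec_transpose, mulVec_mulVec, hQ,
      one_mulVec]
  exact (pow_left_inj₀ (enorm'_nonneg _) (enorm'_nonneg _) two_ne_zero).mp hsq

theorem enorm'_transpose_mulVec_le_of_transpose_mul_self_eq_one (hQ : Qᵀ * Q = 1)
    (v : α → ℝ) :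
    enorm' (Qᵀ *ᵥ v) ≤ enorm' v := by
  set w := Qᵀ *ᵥ v
  have hw : enorm' w ^ 2 ≤ enorm' v * enorm' w := calc
    enorm' w ^ 2 = v ⬝ᵥ Q *ᵥ w := by
      rw [enorm'_sq, dotProduct_mulVec, ← mulVec_transpose, transpose_transpose,
        dotProduct_comm]
    _ ≤ enorm' v * enorm' (Q *ᵥ w) := dotProduct_le_enorm'_mul _ _
    _ = enorm' v * enorm' w := by rw [enorm'_mulVec_of_transpose_mul_self_eq_one hQ]
  nlinarith [enorm'_nonneg v, enorm'_nonneg w]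

end OrthonormalColumns

section UnitSphere

variable {α β γ : Type*} [Fintype α] [Fintype β] [Fintype γ]

theorem bddAbove_range_enorm'_mulVec (M : Matrix α β ℝ) :
    BddAbove (Set.range fun x : {x : β → ℝ // enorm' x = 1} => enorm' (M *ᵥ x)) := by
  obtain ⟨C, hC⟩ := exists_enorm'_mulVec_le M
  refine ⟨C, ?_⟩
  rintro _ ⟨⟨x, hx⟩, rfl⟩
  simpa [hx] using hC x

theorem enorm'_mulVec_le_opNorm' (M : Matrix α β ℝ) {x : β → ℝ} (hx : enorm' x = 1) :
    enorm' (M *ᵥ x) ≤ opNorm' M :=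
  le_ciSup (bddAbove_range_enorm'_mulVec M) (⟨x, hx⟩ : {x : β → ℝ // enorm' x = 1})

theorem opNorm'_nonneg (M : Matrix α β ℝ) : 0 ≤ opNorm' M :=
  Real.iSup_nonneg fun _ => enorm'_nonneg _

theorem sMin'_nonneg (M : Matrix α β ℝ) : 0 ≤ sMin' M :=
  Real.iInf_nonneg fun _ => enorm'_nonneg _

theorem sMin'_mul_enorm'_le (M : Matrix α β ℝ) (v : β → ℝ) :
    sMin' M * enorm' v ≤ enorm' (M *ᵥ v) := by
  rcases (enorm'_nonneg v).eq_or_lt with hv | hv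
  · rw [← hv, mul_zero]
    exact enorm'_nonneg _
  · have hunit : enorm' ((enorm' v)⁻¹ • v) = 1 := by
      rw [enorm'_smul, abs_of_pos (inv_pos.mpr hv), inv_mul_cancel₀ hv.ne']
    have hle : sMin' M ≤ (enorm' v)⁻¹ * enorm' (M *ᵥ v) := by
      rw [← abs_of_pos (inv_pos.mpr hv), ← enorm'_smul, ← mulVec_smul]
      exact ciInf_le ⟨0, by rintro _ ⟨_, rfl⟩; exact enorm'_nonneg _⟩
        (⟨_, hunit⟩ : {x : β → ℝ // enorm' x = 1})
    rwa [← le_div_iff₀ hv, div_eq_inv_mul]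

theorem sMin'_mul_sMin'_mul_enorm'_le (A : Matrix α β ℝ) (B : Matrix β γ ℝ) (v : γ → ℝ) :
    sMin' A * sMin' B * enorm' v ≤ enorm' ((A * B) *ᵥ v) := calc
  sMin' A * sMin' B * enorm' v = sMin' A * (sMin' B * enorm' v) := mul_assoc _ _ _
  _ ≤ sMin' A * enorm' (B *ᵥ v) :=
    mul_le_mul_of_nonneg_left (sMin'_mul_enorm'_le B v) (sMin'_nonneg A)
  _ ≤ enorm' (A *ᵥ B *ᵥ v) := sMin'_mul_enorm'_le A _
  _ = enorm' ((A * B) *ᵥ v) := by rw [mulVec_mulVec]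

end UnitSphere

/-- Norm bound for B* = R⁻¹QᵀA: ‖B*‖₂ ≤ ‖A‖₂ / (σ_min(A) σ_min(Ω)). -/
theorem bstar_norm_bound (n d k : ℕ)
    (A : Matrix (Fin n) (Fin d) ℝ) (Ω : Matrix (Fin d) (Fin k) ℝ)
    (Q : Matrix (Fin n) (Fin k) ℝ) (R : Matrix (Fin k) (Fin k) ℝ)
    (hQR : A * Ω = Q * R) (hQ : Qᵀ * Q = 1) (hR : IsUnit R.det)
    (hA : 0 < sMin' A) (hΩ : 0 < sMin' Ω) :
    opNorm' (R⁻¹ * (Qᵀ * A)) ≤ opNorm' A / (sMin' A * sMin' Ω) := by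
  have hσ : 0 < sMin' A * sMin' Ω := mul_pos hA hΩ
  refine Real.iSup_le (fun ⟨x, hx⟩ => ?_) (div_nonneg (opNorm'_nonneg A) hσ.le)
  set y := (R⁻¹ * (Qᵀ * A)) *ᵥ x
  have hRy : R *ᵥ y = Qᵀ *ᵥ A *ᵥ x := by
    rw [mulVec_mulVec, ← Matrix.mul_assoc, mul_nonsing_inv _ hR, Matrix.one_mul, mulVec_mulVec]
  rw [le_div_iff₀ hσ, mul_comm]
  calc sMin' A * sMin' Ω * enorm' y ≤ enorm' ((A * Ω) *ᵥ y) :=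
        sMin'_mul_sMin'_mul_enorm'_le A Ω y
    _ = enorm' (R *ᵥ y) := by
        rw [hQR, ← mulVec_mulVec, enorm'_mulVec_of_transpose_mul_self_eq_one hQ]
    _ ≤ enorm' (A *ᵥ x) := by
        rw [hRy]; exact enorm'_transpose_mulVec_le_of_transpose_mul_self_eq_one hQ _
    _ ≤ opNorm' A := enorm'_mulVec_le_opNorm' A hx
end

section
/- Monotonicity in the filter ratio: in the bilevel setting with constraint r/(1+θ₀χ(a)²) + (m−r)/(1+θ₀χ(b)²) = m−k and r < k, as the ratio χ(a)²/χ(b)² → ∞ the resulting error Θ̃ = ra²/(1+θ₀χ(a)²) + (m−r)b²/(1+θ₀χ(b)²) tends to (m−k)b², matching the Eckart–Young lower bound for rank-k approximation of the bilevel matrix. -/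
/-!
Dropping the nonnegative `a`-term, the constraint gives `(m - r) / (1 + θ₀ χ(b)²) ≤ m - k`, i.e.
`θ₀ χ(b)² ≥ (k - r) / (m - k) > 0`. Hence `θ₀ χ(a)² = θ₀ χ(b)² · χ(a)²/χ(b)² → ∞`, so the `a`-weight
`r / (1 + θ₀ χ(a)²)` tends to `0` and, by the constraint, the `b`-weight tends to `m - k`.
Since `r < k`, the singular values beyond the `k`-th all equal `b`.
-/

open Filter Topology Finset

theorem sub_one_le_of_add_div_eq {u q s y : ℝ} (hu : 0 ≤ u) (hs : 0 < s) (hy : 0 < 1 + y)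
    (h : u + q / (1 + y) = s) : q / s - 1 ≤ y := by
  have hq : q ≤ s * (1 + y) := by
    rw [← div_le_iff₀ hy]
    linarith
  rw [sub_le_iff_le_add, div_le_iff₀ hs]
  linarith

theorem tendsto_atTop_of_le_of_tendsto_div_atTop {α : Type*} {l : Filter α} {x y : α → ℝ}
    {c : ℝ} (hc : 0 < c) (hy : ∀ i, c ≤ y i) (h : Tendsto (fun i => x i / y i) l atTop) :
    Tendsto x l atTop := by
  refine tendsto_atTop_mono' l ?_ (h.const_mul_atTop hc)
  filter_upwards [h.eventually_ge_atTop 0] with i hi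
  calc c * (x i / y i) ≤ y i * (x i / y i) := mul_le_mul_of_nonneg_right (hy i) hi
    _ = x i := mul_div_cancel₀ _ (hc.trans_le (hy i)).ne'

theorem tendsto_mul_add_mul_of_add_eq {α : Type*} {l : Filter α} {u v : α → ℝ} {s : ℝ}
    (huv : ∀ i, u i + v i = s) (hu : Tendsto u l (𝓝 0)) (A B : ℝ) :
    Tendsto (fun i => A * u i + B * v i) l (𝓝 (s * B)) := by
  have hv : Tendsto v l (𝓝 s) := by
    simpa only [sub_zero] using ((tendsto_const_nhds (x := s)).sub hu).congr fun i =>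
      (eq_sub_of_add_eq' (huv i)).symm
  simpa [mul_comm s] using (hu.const_mul A).add (hv.const_mul B)

theorem sum_filter_le_ite_sq {m r k : ℕ} (hrk : r ≤ k) (hkm : k < m) (a b : ℝ) :
    ∑ j ∈ univ.filter (fun j : Fin m => k ≤ (j : ℕ)), (if (j : ℕ) < r then a else b) ^ 2
      = ((m : ℝ) - k) * b ^ 2 := by
  have hfilter : univ.filter (fun j : Fin m => k ≤ (j : ℕ)) = Ici ⟨k, hkm⟩ := by
    ext j
    simp [Fin.le_def]
  rw [sum_congr rfl fun j hj => by rw [if_neg (by simp at hj; omega)], sum_const, hfilter,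
    Fin.card_Ici, nsmul_eq_mul, Nat.cast_sub hkm.le]

theorem filter_ratio_limit_general (m r k : ℕ) (hrk : r < k) (hkm : k < m)
    (a b : ℝ)
    (ca cb θ₀ : ℕ → ℝ)
    (hθ : ∀ n, 0 < θ₀ n)
    (hcon : ∀ n, (r : ℝ) / (1 + θ₀ n * (ca n) ^ 2)
        + ((m : ℝ) - r) / (1 + θ₀ n * (cb n) ^ 2) = (m : ℝ) - k)
    (hratio : Tendsto (fun n => (ca n) ^ 2 / (cb n) ^ 2) atTop atTop) :
    Tendsto (fun n => (r : ℝ) * a ^ 2 / (1 + θ₀ n * (ca n) ^ 2)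
        + ((m : ℝ) - r) * b ^ 2 / (1 + θ₀ n * (cb n) ^ 2))
      atTop (nhds (((m : ℝ) - k) * b ^ 2)) ∧
    ((m : ℝ) - k) * b ^ 2 =
      ∑ j ∈ Finset.univ.filter (fun j : Fin m => k ≤ (j : ℕ)),
        (if (j : ℕ) < r then a else b) ^ 2 := by
  have hden : ∀ n (χ : ℝ), 0 < 1 + θ₀ n * χ ^ 2 := fun n χ => by
    have := hθ n
    positivity
  have hs : (0 : ℝ) < m - k := sub_pos.mpr (by exact_mod_cast hkm)
  have hc : (0 : ℝ) < (m - r) / (m - k) - 1 := by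
    rw [sub_pos, one_lt_div hs]
    linarith [(Nat.cast_lt (α := ℝ)).mpr hrk]
  have hlb : ∀ n, ((m : ℝ) - r) / (m - k) - 1 ≤ θ₀ n * cb n ^ 2 := fun n =>
    sub_one_le_of_add_div_eq (div_nonneg r.cast_nonneg (hden n _).le) hs (hden n _) (hcon n)
  have hθca : Tendsto (fun n => θ₀ n * ca n ^ 2) atTop atTop :=
    tendsto_atTop_of_le_of_tendsto_div_atTop hc hlb
      (hratio.congr fun n => (mul_div_mul_left _ _ (hθ n).ne').symm)
  have hu : Tendsto (fun n => (r : ℝ) / (1 + θ₀ n * ca n ^ 2)) atTop (𝓝 0) :=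
    tendsto_const_nhds.div_atTop (tendsto_atTop_add_const_left _ 1 hθca)
  refine ⟨?_, (sum_filter_le_ite_sq hrk.le hkm a b).symm⟩
  exact (tendsto_mul_add_mul_of_add_eq hcon hu (a ^ 2) (b ^ 2)).congr fun n => by ring

/-- Monotonicity in the filter ratio: as χ(a)²/χ(b)² → ∞ (with the constraint defining
θ₀ holding along the sequence and r < k), the filtered bilevel error tends to (m−k)b²,
which equals the Eckart–Young optimal rank-k error ∑_{j>k} σ_j². -/
theorem filter_ratio_limit (m r k : ℕ) (hrk : r < k) (hkm : k < m)
    (a b : ℝ) (hb : 0 < b) (hab : b < a)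
    (ca cb θ₀ : ℕ → ℝ) (hca : ∀ n, 0 < ca n) (hcb : ∀ n, 0 < cb n)
    (hθ : ∀ n, 0 < θ₀ n)
    (hcon : ∀ n, (r : ℝ) / (1 + θ₀ n * (ca n) ^ 2)
        + ((m : ℝ) - r) / (1 + θ₀ n * (cb n) ^ 2) = (m : ℝ) - k)
    (hratio : Tendsto (fun n => (ca n) ^ 2 / (cb n) ^ 2) atTop atTop) :
    Tendsto (fun n => (r : ℝ) * a ^ 2 / (1 + θ₀ n * (ca n) ^ 2)
        + ((m : ℝ) - r) * b ^ 2 / (1 + θ₀ n * (cb n) ^ 2))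
      atTop (nhds (((m : ℝ) - k) * b ^ 2)) ∧
    ((m : ℝ) - k) * b ^ 2 =
      ∑ j ∈ Finset.univ.filter (fun j : Fin m => k ≤ (j : ℕ)),
        (if (j : ℕ) < r then a else b) ^ 2 :=
  filter_ratio_limit_general m r k hrk hkm a b ca cb θ₀ hθ hcon hratio
end
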